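/- arXiv:1602.06602 — 3 statements merged into one kernel-verified Lean document; each statement's English description precedes it below -/
import Mathlib

section
/- Let A be a nonzero m×n real matrix and suppose that k GE steps (3 ≤ k ≤ min(m,n)) are performed on A with all pivot qualities equal to a common value β ∈ (0,1], i.e., β_r = β for 1 ≤ r ≤ k. Then ρ_k(A) ≤ 4 · β^{−2−H_{k−2}} · √k · k^{(1/4)·log k}, where H_j = ∑_{i=1}^{j} 1/i is the j-th harmonic number. -/
/-!
Fix an entry `(s, t)` of `A^{(k)}` and `r < k`. The square submatrix of `A^{(r)}` on the rows and
columns of the pivots `r + 1, …, k`, bordered by row `s` and column `t`, is reduced by exactly the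
remaining elimination steps, so its determinant is `± p_{r+1} ⋯ p_k · A^{(k)}_{st}`. Hadamard's
inequality bounds it by `(√(k - r + 1) · max |A^{(r)}|)^{k - r + 1}`, and a common pivot quality
means `max |A^{(r)}| = p_{r+1} / β`. In logarithms this gives `k` linear inequalities between
`log |A^{(k)}_{st}|` and the log-pivots. Wilkinson's weights `1 / (N (N + 1))` for `N = k - r < k`
and `1 / k` for `r = 0` sum to one and eliminate all pivots but `p_1 = β max |A|`; what remains is
`∑ log (N + 1) / N ≤ (log k)² / 2 + O(1)`, obtained by comparison with `∫ log x / x`.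
-/

open Finset Real

/-- One Gaussian elimination step on `A` with pivot position `(i, j)`:
`A_{st} - A_{sj} A_{it} / A_{ij}`. -/
noncomputable def geStep {m n : ℕ} (A : Matrix (Fin m) (Fin n) ℝ) (i : Fin m) (j : Fin n) :
    Matrix (Fin m) (Fin n) ℝ :=
  Matrix.of fun s t => A s t - A s j * A i t / A i j

/-- The matrix `A^{(r)}` after `r` GE steps on `A`, where step `r` uses pivot
position `piv (r - 1)` (so `piv` is 0-indexed). -/
noncomputable def geIter {m n : ℕ} (A : Matrix (Fin m) (Fin n) ℝ)
    (piv : ℕ → Fin m × Fin n) : ℕ → Matrix (Fin m) (Fin n) ℝ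
  | 0 => A
  | r + 1 => geStep (geIter A piv r) (piv r).1 (piv r).2

/-- Maximum absolute entry of a matrix. -/
noncomputable def maxAbs {m n : ℕ} (A : Matrix (Fin m) (Fin n) ℝ) : ℝ :=
  ⨆ s, ⨆ t, |A s t|

/-- The magnitude `p_r = |A^{(r-1)}_{i_r j_r}|` of the `r`-th pivot (1-indexed `r`). -/
noncomputable def pivMag {m n : ℕ} (A : Matrix (Fin m) (Fin n) ℝ)
    (piv : ℕ → Fin m × Fin n) (r : ℕ) : ℝ :=
  |geIter A piv (r - 1) (piv (r - 1)).1 (piv (r - 1)).2|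

open scoped Matrix

lemma prod_le_arith_mean_pow {ι : Type*} [Fintype ι] {z : ι → ℝ} (hz : ∀ i, 0 ≤ z i) :
    ∏ i, z i ≤ ((∑ i, z i) / Fintype.card ι) ^ Fintype.card ι := by
  rcases (Fintype.card ι).eq_zero_or_pos with hι | hι
  · simp [Fintype.card_eq_zero_iff.mp hι]
  have hn : (Fintype.card ι : ℝ) ≠ 0 := by positivity
  have amgm := geom_mean_le_arith_mean_weighted univ (fun _ => (Fintype.card ι : ℝ)⁻¹) z
    (fun _ _ => by positivity) (by simp [card_univ, hn]) (fun i _ => hz i)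
  rw [← mul_sum, inv_mul_eq_div] at amgm
  calc ∏ i, z i = (∏ i, z i ^ (Fintype.card ι : ℝ)⁻¹) ^ Fintype.card ι := by
        rw [← prod_pow]
        refine prod_congr rfl fun i _ => ?_
        rw [← rpow_natCast, ← rpow_mul (hz i), inv_mul_cancel₀ hn, rpow_one]
    _ ≤ _ := pow_le_pow_left₀ (prod_nonneg fun i _ => by have := hz i; positivity) amgm _

lemma det_sq_le_of_abs_le {ι : Type*} [Fintype ι] [DecidableEq ι] (C : Matrix ι ι ℝ) {M : ℝ}
    (hM : ∀ i j, |C i j| ≤ M) : C.det ^ 2 ≤ (Fintype.card ι * M ^ 2) ^ Fintype.card ι := by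
  have hP : (Cᴴ * C).PosSemidef := Matrix.posSemidef_conjTranspose_mul_self C
  have hdet : C.det ^ 2 = ∏ i, hP.1.eigenvalues i := by
    have h := hP.1.det_eq_prod_eigenvalues
    simp only [RCLike.ofReal_real_eq_id, id] at h
    rw [← h, Matrix.det_mul, Matrix.det_conjTranspose]
    simp [sq]
  have htrace : (Cᴴ * C).trace ≤ Fintype.card ι * (Fintype.card ι * M ^ 2) :=
    calc (Cᴴ * C).trace = ∑ i, ∑ j, C j i ^ 2 := by
          simp [Matrix.trace, Matrix.mul_apply, sq]
      _ ≤ ∑ _i : ι, ∑ _j : ι, M ^ 2 :=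
          sum_le_sum fun i _ => sum_le_sum fun j _ =>
            (sq_abs _).symm.le.trans (pow_le_pow_left₀ (abs_nonneg _) (hM j i) 2)
      _ = _ := by simp
  rw [hdet]
  refine (prod_le_arith_mean_pow hP.eigenvalues_nonneg).trans (pow_le_pow_left₀ ?_ ?_ _)
  · exact div_nonneg (sum_nonneg fun i _ => hP.eigenvalues_nonneg i) (by positivity)
  · rcases (Fintype.card ι).eq_zero_or_pos with hι | hι
    · simp [hι]
    have htr := hP.1.trace_eq_sum_eigenvalues
    simp only [RCLike.ofReal_real_eq_id, id] at htr
    rw [div_le_iff₀ (by positivity), mul_comm, ← htr]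
    exact htrace

lemma integral_log_div_self {a b : ℝ} (ha : 0 < a) (hb : 0 < b) :
    ∫ x in a..b, log x / x = (log b ^ 2 - log a ^ 2) / 2 := by
  have hpos : ∀ x ∈ Set.uIcc a b, 0 < x := fun x hx => lt_of_lt_of_le (lt_min ha hb) hx.1
  have hderiv : ∀ x ∈ Set.uIcc a b, HasDerivAt (fun x => log x ^ 2 / 2) (log x / x) x := by
    intro x hx
    refine (((hasDerivAt_log (hpos x hx).ne').pow 2).div_const 2).congr_deriv ?_
    field_simp
    norm_num
  have hcont : ContinuousOn (fun x => log x / x) (Set.uIcc a b) :=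
    (continuousOn_log.mono fun x hx => (hpos x hx).ne').div continuousOn_id
      fun x hx => (hpos x hx).ne'
  rw [intervalIntegral.integral_eq_sub_of_hasDerivAt hderiv hcont.intervalIntegrable]
  ring

lemma sum_log_div_self_le {k : ℕ} (hk : 3 ≤ k) :
    ∑ N ∈ Icc 1 k, log N / N ≤ log 2 / 2 + log 3 / 3 + (log k ^ 2 - log 3 ^ 2) / 2 := by
  have hsplit : ∑ N ∈ Icc 1 k, log N / N
      = log 2 / 2 + log 3 / 3 + ∑ i ∈ Ico 3 k, log ↑(i + 1) / ↑(i + 1) := by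
    rw [← Ico_add_one_right_eq_Icc, sum_Ico_eq_sum_range,
      Nat.add_sub_cancel, ← sum_range_add_sum_Ico _ hk]
    simp [sum_range_succ, add_comm]
    norm_num
  have hanti : AntitoneOn (fun x : ℝ => log x / x) (Set.Icc 3 k) :=
    log_div_self_antitoneOn.mono fun x hx =>
      le_trans (by linarith [exp_one_lt_d9]) (Set.mem_Icc.mp hx).1
  have hint := AntitoneOn.sum_le_integral_Ico hk (by exact_mod_cast hanti)
  rw [integral_log_div_self (by norm_num) (by positivity)] at hint
  push_cast at hint hsplit ⊢
  linarith

lemma log_add_one_le_log_add_inv {x : ℝ} (hx : 0 < x) : log (x + 1) ≤ log x + x⁻¹ := by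
  have h := log_le_sub_one_of_pos (show 0 < (x + 1) / x by positivity)
  rw [log_div (by positivity) hx.ne'] at h
  have : (x + 1) / x - 1 = x⁻¹ := by field_simp; ring
  linarith

lemma log_succ_add_sum_log_succ_div_le {k : ℕ} (hk : 3 ≤ k) :
    log (k + 1) + ∑ N ∈ Icc 1 k, log (N + 1) / N ≤ 4 * log 2 + log k + log k ^ 2 / 2 := by
  have hk' : (3 : ℝ) ≤ k := by exact_mod_cast hk
  have hterm : ∀ N ∈ Icc 1 k, log ((N : ℝ) + 1) / N ≤ log N / N + ((N : ℝ) ^ 2)⁻¹ := by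
    intro N hN
    have hN : (0 : ℝ) < N := by exact_mod_cast (mem_Icc.mp hN).1
    calc log ((N : ℝ) + 1) / N ≤ (log N + (N : ℝ)⁻¹) / N := by
          gcongr; exact log_add_one_le_log_add_inv hN
      _ = log N / N + ((N : ℝ) ^ 2)⁻¹ := by field_simp
  have hsq : ∑ N ∈ Icc 1 k, ((N : ℝ) ^ 2)⁻¹ ≤ 2 := by
    have : Icc 1 k = Ioo 0 (k + 1) := by ext; simp; omega
    simpa [this] using sum_Ioo_inv_sq_le (α := ℝ) 0 (k + 1)
  have hlast : log ((k : ℝ) + 1) ≤ log k + 1 / 3 := by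
    have := log_add_one_le_log_add_inv (x := (k : ℝ)) (by positivity)
    have : (k : ℝ)⁻¹ ≤ 1 / 3 := by rw [inv_le_comm₀ (by positivity) (by norm_num)]; linarith
    linarith
  have hlog3 : 1 ≤ log 3 := by
    rw [le_log_iff_exp_le (by norm_num)]; linarith [exp_one_lt_d9]
  have hsum := (sum_le_sum hterm).trans_eq sum_add_distrib
  have := sum_log_div_self_le hk
  nlinarith [log_two_gt_d9]

lemma sum_Icc_inv_le_add_two (k : ℕ) :
    ∑ N ∈ Icc 1 k, (N : ℝ)⁻¹ ≤ ∑ N ∈ Icc 1 (k - 2), (N : ℝ)⁻¹ + 2 := by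
  have hIcc : ∀ j, Icc 1 j = Ioc 0 j := fun j => by ext; simp; omega
  rw [hIcc, hIcc, ← sum_Ioc_consecutive _ (Nat.zero_le (k - 2)) (Nat.sub_le k 2)]
  gcongr
  calc ∑ N ∈ Ioc (k - 2) k, (N : ℝ)⁻¹ ≤ #(Ioc (k - 2) k) • (1 : ℝ) :=
        sum_le_card_nsmul _ _ _ fun N hN => inv_le_one_of_one_le₀ (by
          have := (mem_Ioc.mp hN).1; exact_mod_cast (by omega : 1 ≤ N))
    _ ≤ 2 := by
      rw [Nat.card_Ioc, nsmul_eq_mul, mul_one]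
      exact_mod_cast (by omega : k - (k - 2) ≤ 2)

lemma four_mul_rpow_mul_sqrt_mul_rpow_eq_exp {β c x : ℝ} (hβ : 0 < β) (hx : 0 < x) :
    4 * β ^ (-c) * √x * x ^ ((1 / 4 : ℝ) * log x) =
      exp (2 * log 2 + c * log β⁻¹ + log x / 2 + log x ^ 2 / 4) := by
  rw [← exp_log (by positivity : 0 < 4 * β ^ (-c) * √x * x ^ ((1 / 4 : ℝ) * log x))]
  congr 1
  rw [log_mul (by positivity) (by positivity), log_mul (by positivity) (by positivity),
    log_mul (by positivity) (by positivity), log_rpow hβ, log_sqrt hx.le, log_rpow hx, log_inv,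
    show (4 : ℝ) = 2 ^ 2 by norm_num, log_pow]
  push_cast
  ring

section WilkinsonWeights

variable {k : ℕ} {z L : ℝ} {y : ℕ → ℝ}

-- The bound for `r = k - N` enters with weight `1 / (N (N + 1))`.
lemma weighted_sum_le_of_forall_log_pivot_bound
    (h : ∀ r < k, 2 * (z + ∑ i ∈ Ico r k, y i) ≤
      ((k - r : ℕ) + 1 : ℝ) * (log ((k - r : ℕ) + 1) + 2 * (y r + L))) :
    ∀ N ≤ k, 2 * z * N / (N + 1) ≤
      ∑ j ∈ Icc 1 N, (log (j + 1) + 2 * L) / j + 2 * (∑ i ∈ Ico (k - N) k, y i) / (N + 1) := by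
  intro N
  induction N with
  | zero => simp
  | succ N ih =>
    intro hN
    have hstep := h (k - (N + 1)) (by omega)
    rw [show k - (k - (N + 1)) = N + 1 by omega, sum_eq_sum_Ico_succ_bot (by omega),
      show k - (N + 1) + 1 = k - N by omega] at hstep
    rw [sum_Icc_succ_top (by omega), sum_eq_sum_Ico_succ_bot (by omega),
      show k - (N + 1) + 1 = k - N by omega]
    set Y := ∑ i ∈ Ico (k - N) k, y i
    push_cast at hstep ⊢
    have hdiff : 2 * z * (N + 1) / (N + 1 + 1) - 2 * z * N / (N + 1)
        - (log (N + 1 + 1) + 2 * L) / (N + 1) - 2 * (y (k - (N + 1)) + Y) / (N + 1 + 1)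
        + 2 * Y / (N + 1)
        = (2 * (z + (y (k - (N + 1)) + Y))
          - (N + 1 + 1) * (log (N + 1 + 1) + 2 * (y (k - (N + 1)) + L)))
          / ((N + 1) * (N + 1 + 1)) := by
      field_simp
      ring
    have := div_nonpos_of_nonpos_of_nonneg (sub_nonpos.mpr hstep)
      (by positivity : (0 : ℝ) ≤ (N + 1) * (N + 1 + 1))
    linarith [ih (by omega)]

lemma two_mul_le_of_forall_log_pivot_bound (hk : 0 < k)
    (h : ∀ r < k, 2 * (z + ∑ i ∈ Ico r k, y i) ≤
      ((k - r : ℕ) + 1 : ℝ) * (log ((k - r : ℕ) + 1) + 2 * (y r + L))) :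
    2 * z ≤ 2 * (y 0 + L) + 2 * L * ∑ N ∈ Icc 1 k, (N : ℝ)⁻¹ +
      (log (k + 1) + ∑ N ∈ Icc 1 k, log (N + 1) / N) := by
  have hall := weighted_sum_le_of_forall_log_pivot_bound h k le_rfl
  have hfirst := h 0 hk
  rw [Nat.sub_self] at hall
  rw [Nat.sub_zero] at hfirst
  have hdiff : 2 * z - 2 * z * k / (k + 1) + 2 * (∑ i ∈ Ico 0 k, y i) / (k + 1)
      - (log (k + 1) + 2 * (y 0 + L))
      = (2 * (z + ∑ i ∈ Ico 0 k, y i) - (k + 1) * (log (k + 1) + 2 * (y 0 + L))) / (k + 1) := by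
    field_simp
    ring
  have hsplit : ∑ j ∈ Icc 1 k, (log ((j : ℝ) + 1) + 2 * L) / j
      = 2 * L * ∑ N ∈ Icc 1 k, (N : ℝ)⁻¹ + ∑ N ∈ Icc 1 k, log ((N : ℝ) + 1) / N := by
    rw [mul_sum, ← sum_add_distrib]
    exact sum_congr rfl fun j _ => by ring
  have := div_nonpos_of_nonpos_of_nonneg (sub_nonpos.mpr hfirst)
    (by positivity : (0 : ℝ) ≤ k + 1)
  linarith

end WilkinsonWeights

section GaussianElimination

variable {m n : ℕ}

lemma abs_le_maxAbs (A : Matrix (Fin m) (Fin n) ℝ) (s : Fin m) (t : Fin n) :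
    |A s t| ≤ maxAbs A :=
  (le_ciSup (Set.finite_range fun t => |A s t|).bddAbove t).trans
    (le_ciSup (Set.finite_range fun s => ⨆ t, |A s t|).bddAbove s)

lemma maxAbs_pos {A : Matrix (Fin m) (Fin n) ℝ} {s : Fin m} {t : Fin n} (h : A s t ≠ 0) :
    0 < maxAbs A :=
  (abs_pos.mpr h).trans_le (abs_le_maxAbs A s t)

lemma maxAbs_le {A : Matrix (Fin m) (Fin n) ℝ} {c : ℝ} (h : ∀ s t, |A s t| ≤ c) (hc : 0 ≤ c) :
    maxAbs A ≤ c :=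
  Real.iSup_le (fun s => Real.iSup_le (h s) hc) hc

lemma geIter_congr (A : Matrix (Fin m) (Fin n) ℝ) {piv piv' : ℕ → Fin m × Fin n} {d : ℕ}
    (h : ∀ i < d, piv i = piv' i) : geIter A piv d = geIter A piv' d := by
  induction d with
  | zero => rfl
  | succ d ih =>
    simp only [geIter, h d d.lt_succ_self, ih fun i hi => h i (hi.trans d.lt_succ_self)]

lemma geIter_geIter (A : Matrix (Fin m) (Fin n) ℝ) (piv : ℕ → Fin m × Fin n) (r i : ℕ) :
    geIter (geIter A piv r) (fun j => piv (r + j)) i = geIter A piv (r + i) := by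
  induction i with
  | zero => rfl
  | succ i ih => simp only [geIter, ih]; rfl

lemma det_eq_mul_det_geStep {d : ℕ} (C : Matrix (Fin (d + 1)) (Fin (d + 1)) ℝ) (h : C 0 0 ≠ 0) :
    C.det = C 0 0 * ((geStep C 0 0).submatrix Fin.succ Fin.succ).det := by
  -- `geStep C 0 0` subtracts multiples of row `0` from the other rows, and also clears row `0`.
  set B := (geStep C 0 0).updateRow 0 (C 0)
  have hCB : C.det = B.det := by
    refine Matrix.det_eq_of_forall_row_eq_smul_add_const
      (fun i => if i = 0 then 0 else C i 0 / C 0 0) 0 (by simp) fun i j => ?_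
    by_cases hi : i = 0
    · simp [B, hi]
    · simp [B, hi, geStep]
      ring
  rw [hCB, Matrix.det_succ_column_zero, Fin.sum_univ_succ]
  have hcol : ∀ i : Fin d, B i.succ 0 = 0 := fun i => by simp [B, geStep, h]
  have hsub : B.submatrix Fin.succ Fin.succ = (geStep C 0 0).submatrix Fin.succ Fin.succ := by
    ext i j
    simp [B, Fin.succ_ne_zero]
  simp [hcol, hsub, B]

lemma det_submatrix_pivots (B : Matrix (Fin m) (Fin n) ℝ) (q : ℕ → Fin m × Fin n) (d : ℕ)
    (hq : ∀ i < d, geIter B q i (q i).1 (q i).2 ≠ 0) :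
    (B.submatrix (fun i : Fin (d + 1) => (q i).1) (fun i : Fin (d + 1) => (q i).2)).det =
      (∏ i ∈ range d, geIter B q i (q i).1 (q i).2) * geIter B q d (q d).1 (q d).2 := by
  induction d generalizing B q with
  | zero => simp [geIter]
  | succ d ih =>
    rw [det_eq_mul_det_geStep _ (hq 0 d.succ_pos)]
    have hsub : (geStep (B.submatrix (fun i : Fin (d + 2) => (q i).1)
        fun i : Fin (d + 2) => (q i).2) 0 0).submatrix Fin.succ Fin.succ =
          (geIter B q 1).submatrix (fun i : Fin (d + 1) => (q (1 + i)).1)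
            (fun i : Fin (d + 1) => (q (1 + i)).2) := by
      ext i j
      simp [geStep, geIter, add_comm]
    rw [hsub, ih (geIter B q 1) (fun j => q (1 + j)) fun i hi => by
      rw [geIter_geIter]; exact hq (1 + i) (by omega)]
    simp only [geIter_geIter B q 1]
    rw [prod_range_succ' _ d]
    simp only [add_comm 1]
    change geIter B q 0 (q 0).1 (q 0).2 * _ = _
    ring

lemma prod_pivots_mul_entry_sq_le (A : Matrix (Fin m) (Fin n) ℝ) (piv : ℕ → Fin m × Fin n)
    {r k : ℕ} (hrk : r ≤ k) (hpiv : ∀ i ∈ Ico r k, geIter A piv i (piv i).1 (piv i).2 ≠ 0)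
    (s : Fin m) (t : Fin n) :
    ((∏ i ∈ Ico r k, geIter A piv i (piv i).1 (piv i).2) * geIter A piv k s t) ^ 2 ≤
      (((k - r + 1 : ℕ) : ℝ) * maxAbs (geIter A piv r) ^ 2) ^ (k - r + 1) := by
  set q := Function.update (fun i => piv (r + i)) (k - r) (s, t)
  have hq : ∀ i < k - r, q i = piv (r + i) := fun i hi => Function.update_of_ne hi.ne _ _
  have hlast : q (k - r) = (s, t) := Function.update_self _ _ _
  have hiter : ∀ i ≤ k - r, geIter (geIter A piv r) q i = geIter A piv (r + i) := fun i hi => by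
    rw [geIter_congr _ fun j hj => hq j (hj.trans_le hi), geIter_geIter]
  have hdet := det_submatrix_pivots (geIter A piv r) q (k - r) fun i hi => by
    rw [hiter i hi.le, hq i hi]
    exact hpiv (r + i) (mem_Ico.mpr ⟨by omega, by omega⟩)
  rw [hiter _ le_rfl, hlast, Nat.add_sub_cancel' hrk,
    prod_congr rfl fun i hi => by rw [hiter i (mem_range.mp hi).le, hq i (mem_range.mp hi)],
    ← prod_Ico_eq_prod_range (fun i => geIter A piv i (piv i).1 (piv i).2)] at hdet
  rw [← hdet]
  simpa using det_sq_le_of_abs_le ((geIter A piv r).submatrix (fun i : Fin (k - r + 1) => (q i).1)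
    fun i : Fin (k - r + 1) => (q i).2) fun i j => abs_le_maxAbs (geIter A piv r) _ _

lemma abs_geIter_le_of_forall_abs_pivot_eq {k : ℕ} (hk : 3 ≤ k) (A : Matrix (Fin m) (Fin n) ℝ)
    (piv : ℕ → Fin m × Fin n) (hpiv : ∀ r < k, geIter A piv r (piv r).1 (piv r).2 ≠ 0)
    {β : ℝ} (hβ : 0 < β) (hβ1 : β ≤ 1)
    (hquality : ∀ r < k, |geIter A piv r (piv r).1 (piv r).2| = β * maxAbs (geIter A piv r))
    (s : Fin m) (t : Fin n) :
    |geIter A piv k s t| ≤ 4 * β ^ (-(2 + ∑ i ∈ Icc 1 (k - 2), (i : ℝ)⁻¹)) * √k *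
      (k : ℝ) ^ ((1 / 4 : ℝ) * log k) * maxAbs A := by
  set L := log β⁻¹
  set y : ℕ → ℝ := fun r => log |geIter A piv r (piv r).1 (piv r).2|
  have hA : 0 < maxAbs A := maxAbs_pos (hpiv 0 (by omega))
  have hlogM : ∀ r < k, log (maxAbs (geIter A piv r)) = y r + L := fun r hr => by
    rw [← inv_mul_cancel_left₀ hβ.ne' (maxAbs _), ← hquality r hr,
      log_mul (inv_pos.mpr hβ).ne' (abs_pos.mpr (hpiv r hr)).ne']
    ring
  rw [four_mul_rpow_mul_sqrt_mul_rpow_eq_exp hβ (by positivity)]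
  rcases eq_or_ne (geIter A piv k s t) 0 with hz | hz
  · rw [hz, abs_zero]
    positivity
  have hbound : ∀ r < k, 2 * (log |geIter A piv k s t| + ∑ i ∈ Ico r k, y i) ≤
      ((k - r : ℕ) + 1 : ℝ) * (log ((k - r : ℕ) + 1) + 2 * (y r + L)) := fun r hr => by
    have hsq := prod_pivots_mul_entry_sq_le A piv hr.le
      (fun i hi => hpiv i (mem_Ico.mp hi).2) s t
    have hprod : ∏ i ∈ Ico r k, geIter A piv i (piv i).1 (piv i).2 ≠ 0 :=
      prod_ne_zero_iff.mpr fun i hi => hpiv i (mem_Ico.mp hi).2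
    have hlog := log_le_log ((pow_pos (abs_pos.mpr (mul_ne_zero hprod hz)) 2).trans_eq (sq_abs _))
      hsq
    rw [log_pow, log_pow, log_mul (by positivity) (pow_pos (maxAbs_pos (hpiv r hr)) 2).ne',
      log_pow, hlogM r hr, ← log_abs, abs_mul,
      log_mul (abs_pos.mpr hprod).ne' (abs_pos.mpr hz).ne', abs_prod,
      log_prod fun i hi => (abs_pos.mpr (hpiv i (mem_Ico.mp hi).2)).ne'] at hlog
    push_cast at hlog ⊢
    linarith
  have hcomb := two_mul_le_of_forall_log_pivot_bound (by omega) hbound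
  have hharmonic := mul_le_mul_of_nonneg_left (sum_Icc_inv_le_add_two k)
    (log_nonneg (one_le_inv_iff₀.mpr ⟨hβ, hβ1⟩) : 0 ≤ L)
  have hM0 : log (maxAbs A) = y 0 + L := hlogM 0 (by omega)
  rw [← exp_log (abs_pos.mpr hz), ← exp_log hA, ← exp_add]
  exact exp_le_exp.mpr (by linarith [log_succ_add_sum_log_succ_div_le hk])

end GaussianElimination

theorem ge_growth_common_pivot_quality_general
    (m n k : ℕ) (A : Matrix (Fin m) (Fin n) ℝ)
    (hk : 3 ≤ k)
    (piv : ℕ → Fin m × Fin n)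
    (hpiv : ∀ r < k, geIter A piv r (piv r).1 (piv r).2 ≠ 0)
    (β : ℝ) (hβpos : 0 < β) (hβle : β ≤ 1)
    (hβdef : ∀ r, 1 ≤ r → r ≤ k →
      β = pivMag A piv r / maxAbs (geIter A piv (r - 1))) :
    maxAbs (geIter A piv k) / maxAbs A ≤
      4 * β ^ (-(2 + ∑ i ∈ Finset.Icc 1 (k - 2), ((i : ℝ))⁻¹)) *
        Real.sqrt k * (k : ℝ) ^ ((1 / 4 : ℝ) * Real.log k) := by
  have hquality : ∀ r < k,
      |geIter A piv r (piv r).1 (piv r).2| = β * maxAbs (geIter A piv r) := fun r hr => by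
    rw [hβdef (r + 1) (by omega) (by omega), Nat.add_sub_cancel,
      div_mul_cancel₀ _ (maxAbs_pos (hpiv r hr)).ne']
    rfl
  have hA : 0 < maxAbs A := maxAbs_pos (hpiv 0 (by omega))
  rw [div_le_iff₀ hA]
  exact maxAbs_le (abs_geIter_le_of_forall_abs_pivot_eq hk A piv hpiv hβpos hβle hquality)
    (mul_pos (by positivity) hA).le

/-- **Example 1 (common pivot quality).** If all pivot qualities equal a common value
`β ∈ (0,1]`, then `ρ_k(A) ≤ 4 β^{-2-H_{k-2}} √k k^{(1/4) log k}`, where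
`H_j = ∑_{i=1}^j 1/i` is the `j`-th harmonic number. -/
theorem ge_growth_common_pivot_quality
    (m n k : ℕ) (A : Matrix (Fin m) (Fin n) ℝ) (hA : A ≠ 0)
    (hk : 3 ≤ k) (hkmn : k ≤ min m n)
    (piv : ℕ → Fin m × Fin n)
    (hpiv : ∀ r < k, geIter A piv r (piv r).1 (piv r).2 ≠ 0)
    (β : ℝ) (hβpos : 0 < β) (hβle : β ≤ 1)
    (hβdef : ∀ r, 1 ≤ r → r ≤ k →
      β = pivMag A piv r / maxAbs (geIter A piv (r - 1))) :
    maxAbs (geIter A piv k) / maxAbs A ≤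
      4 * β ^ (-(2 + ∑ i ∈ Finset.Icc 1 (k - 2), ((i : ℝ))⁻¹)) *
        Real.sqrt k * (k : ℝ) ^ ((1 / 4 : ℝ) * Real.log k) :=
  ge_growth_common_pivot_quality_general m n k A hk piv hpiv β hβpos hβle hβdef
end

section
/- Let n ≥ 2, let β_1,…,β_{n−1} ∈ (0,1], and let A_1 be the n×n real matrix with (A_1)_{st} = 1 if s = t or t = n, (A_1)_{st} = −β_t^{-1} if s > t and t < n, and (A_1)_{st} = 0 otherwise. Perform GE on A_1 with the diagonal pivots (1,1), (2,2), …, (n−1,n−1). Then at each step k (1 ≤ k ≤ n−1) the pivot quality in the sense of partial pivoting equals β_k, i.e., |A^{(k−1)}_{kk}| / max_{1 ≤ s ≤ n} |A^{(k−1)}_{sk}| = β_k. -/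
/-!
By induction on `r`, the iterate `A₁^{(r)}` vanishes in its first `r` rows and columns and
agrees with `A₁` elsewhere, except that its last column is scaled by `∏_{j=1}^{r} (1 + β_j⁻¹)`:
the pivot is `1` and the pivot row is zero off the pivot and the last column. Hence column `k`
of `A₁^{(k-1)}` is `(0, …, 0, 1, -β_k⁻¹, …, -β_k⁻¹)`, whose largest absolute entry is
`β_k⁻¹ ≥ 1`.
-/

open Finset Real

/-- Modified Wilkinson matrix `A₁`: `(A₁)_{st} = 1` if `s = t` or `t = n` (1-based),
`(A₁)_{st} = -β_t⁻¹` if `s > t` and `t < n`, and `0` otherwise. Here indices are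
0-based, so column `t` (0-based) corresponds to `β (t+1)`. -/
noncomputable def wilkA1 (n : ℕ) (β : ℕ → ℝ) : Matrix (Fin n) (Fin n) ℝ :=
  Matrix.of fun s t =>
    if (s : ℕ) = (t : ℕ) ∨ (t : ℕ) = n - 1 then 1
    else if (t : ℕ) < (s : ℕ) then -(β ((t : ℕ) + 1))⁻¹ else 0

/-- Diagonal pivot positions `(1,1), (2,2), …` (0-based: `(r, r)` at step `r + 1`). -/
def diagPiv (n : ℕ) (hn : 0 < n) : ℕ → Fin n × Fin n :=
  fun r => (⟨min r (n - 1), by omega⟩, ⟨min r (n - 1), by omega⟩)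

noncomputable def wilkA1Iter (n : ℕ) (β : ℕ → ℝ) (r : ℕ) : Matrix (Fin n) (Fin n) ℝ :=
  Matrix.of fun s t =>
    if (s : ℕ) < r ∨ (t : ℕ) < r then 0
    else if (t : ℕ) = n - 1 then ∏ j ∈ range r, (1 + (β (j + 1))⁻¹)
    else wilkA1 n β s t

section geStep
variable {m n : ℕ} (A : Matrix (Fin m) (Fin n) ℝ) {i s : Fin m} {j t : Fin n}

theorem geStep_apply : geStep A i j s t = A s t - A s j * A i t / A i j := rfl

theorem geStep_apply_pivot_row (h : A i j ≠ 0) : geStep A i j i t = 0 := by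
  rw [geStep_apply, mul_div_right_comm, div_self h, one_mul, sub_self]

theorem geStep_apply_pivot_col (h : A i j ≠ 0) : geStep A i j s j = 0 := by
  rw [geStep_apply, mul_div_assoc, div_self h, mul_one, sub_self]

theorem geStep_apply_of_apply_pivot_col_eq_zero (h : A s j = 0) :
    geStep A i j s t = A s t := by
  rw [geStep_apply, h, zero_mul, zero_div, sub_zero]

theorem geStep_apply_of_apply_pivot_row_eq_zero (h : A i t = 0) :
    geStep A i j s t = A s t := by
  rw [geStep_apply, h, mul_zero, zero_div, sub_zero]

end geStep

theorem diagPiv_of_lt {n : ℕ} (hn : 0 < n) {r : ℕ} (hr : r < n) :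
    diagPiv n hn r = (⟨r, hr⟩, ⟨r, hr⟩) := by
  simp [diagPiv, Nat.min_eq_left (Nat.le_sub_one_of_lt hr)]

section wilkA1
variable {n : ℕ} {β : ℕ → ℝ} {r : ℕ} {s t : Fin n}

theorem wilkA1_apply_of_eq (h : (s : ℕ) = t) : wilkA1 n β s t = 1 := by
  simp only [wilkA1, Matrix.of_apply]
  rw [if_pos (.inl h)]

theorem wilkA1_apply_of_lt (hst : (t : ℕ) < s) (ht : (t : ℕ) ≠ n - 1) :
    wilkA1 n β s t = -(β (t + 1))⁻¹ := by
  simp only [wilkA1, Matrix.of_apply]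
  rw [if_neg (not_or.2 ⟨hst.ne', ht⟩), if_pos hst]

theorem wilkA1_apply_of_gt (hst : (s : ℕ) < t) (ht : (t : ℕ) ≠ n - 1) :
    wilkA1 n β s t = 0 := by
  simp only [wilkA1, Matrix.of_apply]
  rw [if_neg (by omega), if_neg (by omega)]

theorem wilkA1Iter_zero : wilkA1Iter n β 0 = wilkA1 n β := by
  ext s t
  by_cases ht : (t : ℕ) = n - 1 <;> simp [wilkA1Iter, wilkA1, ht]

theorem wilkA1Iter_apply_of_lt (h : (s : ℕ) < r ∨ (t : ℕ) < r) : wilkA1Iter n β r s t = 0 := by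
  simp [wilkA1Iter, h]

theorem wilkA1Iter_apply_last (hs : r ≤ s) (ht : (t : ℕ) = n - 1) :
    wilkA1Iter n β r s t = ∏ j ∈ range r, (1 + (β (j + 1))⁻¹) := by
  simp only [wilkA1Iter, Matrix.of_apply]
  rw [if_neg (by omega), if_pos ht]

theorem wilkA1Iter_apply_of_ne_last (hs : r ≤ s) (ht : r ≤ t) (htn : (t : ℕ) ≠ n - 1) :
    wilkA1Iter n β r s t = wilkA1 n β s t := by
  simp [wilkA1Iter, hs.not_gt, ht.not_gt, htn]

theorem geStep_wilkA1Iter (hr : r + 1 < n) :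
    geStep (wilkA1Iter n β r) ⟨r, by omega⟩ ⟨r, by omega⟩ = wilkA1Iter n β (r + 1) := by
  set p : Fin n := ⟨r, by omega⟩
  have hpivot : wilkA1Iter n β r p p = 1 :=
    (wilkA1Iter_apply_of_ne_last le_rfl le_rfl (by simp [p]; omega)).trans
      (wilkA1_apply_of_eq rfl)
  ext s t
  rcases lt_trichotomy (s : ℕ) r with hs | hs | hs
  · rw [geStep_apply_of_apply_pivot_col_eq_zero _ (wilkA1Iter_apply_of_lt (.inl hs)),
      wilkA1Iter_apply_of_lt (.inl hs), wilkA1Iter_apply_of_lt (.inl (by omega))]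
  · obtain rfl : s = p := Fin.ext hs
    rw [geStep_apply_pivot_row _ (by simp [hpivot]),
      wilkA1Iter_apply_of_lt (.inl (by simp [p]))]
  rcases lt_trichotomy (t : ℕ) r with ht | ht | ht
  · rw [geStep_apply_of_apply_pivot_row_eq_zero _ (wilkA1Iter_apply_of_lt (.inr ht)),
      wilkA1Iter_apply_of_lt (.inr ht), wilkA1Iter_apply_of_lt (.inr (by omega))]
  · obtain rfl : t = p := Fin.ext ht
    rw [geStep_apply_pivot_col _ (by simp [hpivot]),
      wilkA1Iter_apply_of_lt (.inr (by simp [p]))]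
  by_cases htn : (t : ℕ) = n - 1
  · have hsp : wilkA1Iter n β r s p = -(β (r + 1))⁻¹ :=
      (wilkA1Iter_apply_of_ne_last hs.le le_rfl (by simp [p]; omega)).trans
        (wilkA1_apply_of_lt hs (by simp [p]; omega))
    rw [geStep_apply, hpivot, hsp, wilkA1Iter_apply_last hs.le htn,
      wilkA1Iter_apply_last (s := p) le_rfl htn, wilkA1Iter_apply_last hs htn,
      prod_range_succ]
    ring
  · have hpt : wilkA1Iter n β r p t = 0 :=
      (wilkA1Iter_apply_of_ne_last le_rfl ht.le htn).trans (wilkA1_apply_of_gt ht htn)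
    rw [geStep_apply_of_apply_pivot_row_eq_zero _ hpt,
      wilkA1Iter_apply_of_ne_last hs.le ht.le htn, wilkA1Iter_apply_of_ne_last hs ht htn]

theorem geIter_wilkA1_diagPiv (hn : 0 < n) (hr : r < n) :
    geIter (wilkA1 n β) (diagPiv n hn) r = wilkA1Iter n β r := by
  induction r with
  | zero => exact wilkA1Iter_zero.symm
  | succ r ih =>
    rw [geIter, ih (by omega), diagPiv_of_lt hn (by omega), geStep_wilkA1Iter hr]

theorem wilkA1Iter_apply_pivot_col (hr : r + 1 < n) (s : Fin n) :
    wilkA1Iter n β r s ⟨r, by omega⟩ =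
      if (s : ℕ) < r then 0 else if (s : ℕ) = r then 1 else -(β (r + 1))⁻¹ := by
  have hrn : r ≠ n - 1 := by omega
  split_ifs with hlt heq
  · exact wilkA1Iter_apply_of_lt (.inl hlt)
  · exact (wilkA1Iter_apply_of_ne_last heq.ge le_rfl hrn).trans (wilkA1_apply_of_eq heq)
  · have hgt : r < (s : ℕ) := by omega
    exact (wilkA1Iter_apply_of_ne_last hgt.le le_rfl hrn).trans (wilkA1_apply_of_lt hgt hrn)

theorem iSup_abs_wilkA1Iter_pivot_col (hr : r + 1 < n) (hβ0 : 0 < β (r + 1))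
    (hβ1 : β (r + 1) ≤ 1) :
    ⨆ s : Fin n, |wilkA1Iter n β r s ⟨r, by omega⟩| = (β (r + 1))⁻¹ := by
  have hinv : 1 ≤ (β (r + 1))⁻¹ := (one_le_inv₀ hβ0).2 hβ1
  have habs (s : Fin n) : |wilkA1Iter n β r s ⟨r, by omega⟩| =
      if (s : ℕ) < r then 0 else if (s : ℕ) = r then 1 else (β (r + 1))⁻¹ := by
    rw [wilkA1Iter_apply_pivot_col hr]
    split_ifs <;> simp [hβ0.le]
  have : NeZero n := ⟨by omega⟩
  refine le_antisymm (ciSup_le fun s => ?_) ?_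
  · rw [habs]
    split_ifs <;> linarith
  · calc (β (r + 1))⁻¹ = |wilkA1Iter n β r ⟨r + 1, hr⟩ ⟨r, by omega⟩| := by simp [habs]
      _ ≤ _ := le_ciSup (f := fun s => |wilkA1Iter n β r s ⟨r, by omega⟩|)
        (Finite.bddAbove_range _) _

end wilkA1

/-- **Pivot qualities of partial pivoting on `A₁`.** Performing GE on `A₁` with the
diagonal pivots, at each step `k` (1-based) the partial-pivoting pivot quality equals
`β_k`: `|A^{(k-1)}_{kk}| / max_{1 ≤ s ≤ n} |A^{(k-1)}_{sk}| = β_k`. -/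
theorem wilkA1_pivot_quality
    (n : ℕ) (β : ℕ → ℝ)
    (hβ : ∀ r, 1 ≤ r → r ≤ n - 1 → 0 < β r ∧ β r ≤ 1)
    (k : ℕ) (hk1 : 1 ≤ k) (hk2 : k ≤ n - 1) :
    |geIter (wilkA1 n β) (diagPiv n (by omega)) (k - 1)
        ⟨k - 1, by omega⟩ ⟨k - 1, by omega⟩| /
      (⨆ s : Fin n,
        |geIter (wilkA1 n β) (diagPiv n (by omega)) (k - 1) s ⟨k - 1, by omega⟩|) =
      β k := by
  obtain ⟨hβ0, hβ1⟩ := hβ k hk1 hk2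
  obtain ⟨r, rfl⟩ : ∃ r, k = r + 1 := ⟨k - 1, by omega⟩
  have hr : r + 1 < n := by omega
  simp only [Nat.add_sub_cancel]
  rw [geIter_wilkA1_diagPiv _ (by omega), iSup_abs_wilkA1Iter_pivot_col hr hβ0 hβ1,
    wilkA1Iter_apply_pivot_col hr]
  simp
end

section
/- Let n ≥ 2 and let β_1,…,β_{n−1} ∈ (0,1] with β_r < 1 for at least one r. For 1 ≤ r ≤ n−1 set c_r = β_r^{-1} if β_r < 1 and c_r = 0 if β_r = 1. Let A_2 be the n×n real matrix with (A_2)_{st} = 1 if s = t or t = n, (A_2)_{st} = −c_t if s > t and t < n, and (A_2)_{st} = 0 otherwise. Perform GE on A_2 with the diagonal pivots (1,1), …, (n−1,n−1). Then the intermediate growth factor at step n−1 satisfies ρ_{n−1}(A_2) = (∏_{r=1}^{n−1} (1 + c_r)) / (max_{1 ≤ r ≤ n−1} c_r). -/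
open Finset Real

/-- Modified Wilkinson matrix `A₂` built from the coefficients `c_r`:
`(A₂)_{st} = 1` if `s = t` or `t = n` (1-based), `(A₂)_{st} = -c_t` if `s > t` and
`t < n`, and `0` otherwise (0-based: column `t` corresponds to `c (t+1)`). -/
noncomputable def wilkA2 (n : ℕ) (c : ℕ → ℝ) : Matrix (Fin n) (Fin n) ℝ :=
  Matrix.of fun s t =>
    if (s : ℕ) = (t : ℕ) ∨ (t : ℕ) = n - 1 then 1
    else if (t : ℕ) < (s : ℕ) then -(c ((t : ℕ) + 1)) else 0

/-!
Each diagonal elimination step `k` leaves the trailing block of `A₂` unchanged except for its last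
column, which gets multiplied by `1 + c_k`: the pivot row is `e_k` plus the last column, and every
row below it has multiplier `-c_k`. After `n - 1` steps the only nonzero entry is `∏ (1 + c_r)` in
the corner, while the largest entry of `A₂` is `max 1 (max_r c_r) = max_r c_r`, since some
`c_r = β_r⁻¹` exceeds `1`.
-/

section MaxAbs

variable {m n : ℕ} {A : Matrix (Fin m) (Fin n) ℝ}

theorem le_maxAbs (s : Fin m) (t : Fin n) :
    |A s t| ≤ maxAbs A :=
  (le_ciSup (Finite.bddAbove_range fun t' => |A s t'|) t).trans
    (le_ciSup (Finite.bddAbove_range fun s' => ⨆ t', |A s' t'|) s)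

theorem maxAbs_eq_of_abs_le {x : ℝ} (hle : ∀ s t, |A s t| ≤ x) (s : Fin m) (t : Fin n)
    (hx : |A s t| = x) : maxAbs A = x := by
  have : Nonempty (Fin m) := ⟨s⟩
  have : Nonempty (Fin n) := ⟨t⟩
  exact le_antisymm (ciSup_le fun s => ciSup_le fun t => hle s t) (hx ▸ le_maxAbs s t)

end MaxAbs

section WilkA2

variable {n : ℕ} (c : ℕ → ℝ)

theorem diagPiv_of_le (h0 : 0 < n) {r : ℕ} (hr : r ≤ n - 1) :
    diagPiv n h0 r = (⟨r, by omega⟩, ⟨r, by omega⟩) := by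
  simp [diagPiv, Nat.min_eq_left hr]

theorem geIter_wilkA2_diagPiv (h0 : 0 < n) {r : ℕ} (hr : r ≤ n - 1) (s t : Fin n) :
    geIter (wilkA2 n c) (diagPiv n h0) r s t =
      if (s : ℕ) < r ∨ (t : ℕ) < r then 0
      else if (t : ℕ) = n - 1 then ∏ k ∈ Icc 1 r, (1 + c k)
      else wilkA2 n c s t := by
  induction r generalizing s t with
  | zero =>
    simp only [geIter, Nat.not_lt_zero, or_self, if_false, Icc_eq_empty_of_lt one_pos,
      prod_empty]
    split_ifs with ht <;> simp [wilkA2, ht]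
  | succ r ih =>
    have hr' : r ≤ n - 1 := by omega
    set E := geIter (wilkA2 n c) (diagPiv n h0) r
    set P := ∏ k ∈ Icc 1 r, (1 + c k)
    let p : Fin n := ⟨r, by omega⟩
    have hpivot : E p p = 1 := by simp [ih hr', p, wilkA2]; omega
    have hrow : ∀ t : Fin n, r < t → E p t = if (t : ℕ) = n - 1 then P else 0 := by
      intro t ht
      rw [ih hr']
      simp only [wilkA2, Matrix.of_apply, p]
      split_ifs <;> first | rfl | omega
    have hcol : ∀ s : Fin n, r < s → E s p = -c (r + 1) := by
      intro s hs
      rw [ih hr']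
      simp only [wilkA2, Matrix.of_apply, p]
      split_ifs <;> first | rfl | omega
    change geStep E (diagPiv n h0 r).1 (diagPiv n h0 r).2 s t = _
    rw [diagPiv_of_le h0 hr']
    change E s t - E s p * E p t / E p p = _
    rw [hpivot, div_one, prod_Icc_succ_top (Nat.le_add_left 1 r)]
    by_cases hst : (s : ℕ) < r + 1 ∨ (t : ℕ) < r + 1
    · rw [if_pos hst]
      by_cases hlt : (s : ℕ) < r ∨ (t : ℕ) < r
      · have hst0 : ∀ s t : Fin n, (s : ℕ) < r ∨ (t : ℕ) < r → E s t = 0 := fun s t h => by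
          rw [ih hr', if_pos h]
        rcases hlt with hs | ht
        · simp [hst0 s t (.inl hs), hst0 s p (.inl hs)]
        · simp [hst0 s t (.inr ht), hst0 p t (.inr ht)]
      · obtain rfl | rfl : s = p ∨ t = p := by simp only [p, Fin.ext_iff]; omega
        · rw [hpivot]; ring
        · rw [hpivot]; ring
    · rw [if_neg (by omega), hcol s (by omega), hrow t (by omega), ih hr', if_neg (by omega)]
      split_ifs <;> ring

theorem maxAbs_geIter_wilkA2_diagPiv (h0 : 0 < n) :
    maxAbs (geIter (wilkA2 n c) (diagPiv n h0) (n - 1)) = |∏ k ∈ Icc 1 (n - 1), (1 + c k)| := by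
  refine maxAbs_eq_of_abs_le (fun s t => ?_) ⟨n - 1, by omega⟩ ⟨n - 1, by omega⟩ ?_
  · rw [geIter_wilkA2_diagPiv c h0 le_rfl]
    split_ifs <;> first | simp | omega
  · simp [geIter_wilkA2_diagPiv c h0 le_rfl]

theorem maxAbs_wilkA2 (hn : 2 ≤ n) (hc : ∀ k ∈ Icc 1 (n - 1), 0 ≤ c k) :
    maxAbs (wilkA2 n c) = max 1 ((Icc 1 (n - 1)).sup' (nonempty_Icc.mpr (by omega)) c) := by
  set S := (Icc 1 (n - 1)).sup' (nonempty_Icc.mpr (by omega)) c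
  have hle : ∀ s t : Fin n, |wilkA2 n c s t| ≤ max 1 S := by
    intro s t
    simp only [wilkA2, Matrix.of_apply]
    split_ifs
    · simp
    · rw [abs_neg, abs_of_nonneg (hc _ (mem_Icc.mpr ⟨by omega, by omega⟩))]
      exact (le_sup' c (mem_Icc.mpr ⟨by omega, by omega⟩)).trans (le_max_right 1 S)
    · simp
  rcases le_total 1 S with hS | hS
  · obtain ⟨k, hk, hSk⟩ := exists_mem_eq_sup' (nonempty_Icc.mpr (by omega : 1 ≤ n - 1)) c
    have hk' := mem_Icc.mp hk
    refine maxAbs_eq_of_abs_le hle ⟨k, by omega⟩ ⟨k - 1, by omega⟩ ?_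
    simp only [wilkA2, Matrix.of_apply, max_eq_right hS]
    rw [if_neg (by omega), if_pos (by omega), Nat.sub_add_cancel hk'.1, abs_neg,
      abs_of_nonneg (hc k hk)]
    exact hSk.symm
  · refine maxAbs_eq_of_abs_le hle ⟨0, by omega⟩ ⟨0, by omega⟩ ?_
    simp [wilkA2, max_eq_left hS]

end WilkA2

/-- **Growth factor of `A₂` under partial pivoting.** With `c_r = β_r⁻¹` if `β_r < 1`
and `c_r = 0` if `β_r = 1`, performing GE on `A₂` with the diagonal pivots gives
`ρ_{n-1}(A₂) = (∏_{r=1}^{n-1} (1 + c_r)) / max_{1 ≤ r ≤ n-1} c_r`. -/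
theorem wilkA2_growth_factor
    (n : ℕ) (hn : 2 ≤ n) (β : ℕ → ℝ)
    (hβ : ∀ r, 1 ≤ r → r ≤ n - 1 → 0 < β r ∧ β r ≤ 1)
    (hmistake : ∃ r, 1 ≤ r ∧ r ≤ n - 1 ∧ β r < 1)
    (c : ℕ → ℝ)
    (hc : ∀ r, 1 ≤ r → r ≤ n - 1 → c r = if β r < 1 then (β r)⁻¹ else 0) :
    maxAbs (geIter (wilkA2 n c) (diagPiv n (by omega)) (n - 1)) / maxAbs (wilkA2 n c) =
      (∏ r ∈ Finset.Icc 1 (n - 1), (1 + c r)) /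
        (Finset.Icc 1 (n - 1)).sup' (Finset.nonempty_Icc.mpr (by omega)) c := by
  have hc0 : ∀ r ∈ Icc 1 (n - 1), 0 ≤ c r := by
    intro r hr
    obtain ⟨hr1, hr2⟩ := mem_Icc.mp hr
    rw [hc r hr1 hr2]
    split_ifs
    exacts [inv_nonneg.mpr (hβ r hr1 hr2).1.le, le_rfl]
  obtain ⟨r, hr1, hr2, hβr⟩ := hmistake
  have hsup : 1 ≤ (Icc 1 (n - 1)).sup' (nonempty_Icc.mpr (by omega)) c := by
    refine le_trans ?_ (le_sup' c (mem_Icc.mpr ⟨hr1, hr2⟩))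
    rw [hc r hr1 hr2, if_pos hβr]
    exact (one_le_inv₀ (hβ r hr1 hr2).1).mpr hβr.le
  rw [maxAbs_geIter_wilkA2_diagPiv, maxAbs_wilkA2 c hn hc0, max_eq_right hsup,
    abs_of_nonneg (prod_nonneg fun k hk => by linarith [hc0 k hk])]
end
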